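/- Let q be a real number with q > 1 and let N be a nonnegative integer. Suppose X : ℕ → ℝ satisfies X(1) = q^{2N} and, for every m ≥ 1, the recursion X(m) = q^{2mN} − Σ_{i=1}^{m−1} [m−1 choose i−1]_q · (∏_{j=i+1}^{m} (q^j + 1)) · X(i). Then for every m ≥ 1 one has X(m) = Σ_{i=1}^{m} (−1)^{m−i} · q^{(m−i)(m−i−1)/2} · [m−1 choose i−1]_q · (∏_{j=i+1}^{m} (q^j + 1)) · q^{2iN}. -/

import Mathlib

/-!
The recursion says `A X = Y` for `Y(m) = q^{2mN}` and the lower unitriangular matrix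
`A(m,i) = |O_{2m}^-(F_q) / P_{B,m-i}|` (`parabolicIndex`), so `X = A⁻¹ Y`, and the claim is that
`A⁻¹(m,i) = (-1)^{m-i} q^{binom(m-i,2)} A(m,i)`. By the q-trinomial identity
`A(m,i) A(i,k) = A(m,k) [m-k choose i-k]_q`, the required orthogonality relations reduce to
`∑_d (-1)^d q^{binom(d,2)} [n choose d]_q = 0` for `n ≥ 1`: the q-binomial theorem
`∑_d q^{binom(d,2)} [n choose d]_q x^d = ∏_{j<n} (1 + q^j x)` at `x = -1`.
-/

/-- The Gaussian binomial coefficient `[n choose k]_q` for a real base `q`. -/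
noncomputable def gbinom (q : ℝ) (n k : ℕ) : ℝ :=
  ∏ j ∈ Finset.Icc 1 k, (q ^ (n - k + j) - 1) / (q ^ j - 1)

open Finset

noncomputable def qFactorial (q : ℝ) (n : ℕ) : ℝ := ∏ j ∈ Icc 1 n, (q ^ j - 1)

section qFactorial

variable {q : ℝ}

lemma pow_sub_one_ne_zero (hq : 1 < q) {j : ℕ} (hj : j ≠ 0) : q ^ j - 1 ≠ 0 :=
  sub_ne_zero.2 (one_lt_pow₀ hq hj).ne'

lemma qFactorial_ne_zero (hq : 1 < q) (n : ℕ) : qFactorial q n ≠ 0 :=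
  prod_ne_zero_iff.2 fun _ hj => pow_sub_one_ne_zero hq (by grind)

lemma qFactorial_succ (q : ℝ) (n : ℕ) :
    qFactorial q (n + 1) = qFactorial q n * (q ^ (n + 1) - 1) :=
  prod_Icc_succ_top (by omega) _

lemma qFactorial_add (q : ℝ) (c k : ℕ) :
    qFactorial q (c + k) = qFactorial q c * ∏ j ∈ Icc 1 k, (q ^ (c + j) - 1) := by
  induction k with
  | zero => simp
  | succ k ih =>
    rw [← add_assoc, qFactorial_succ, ih, prod_Icc_succ_top (by omega), mul_assoc, add_assoc]

lemma gbinom_eq_qFactorial_div (hq : 1 < q) {n k : ℕ} (h : k ≤ n) :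
    gbinom q n k = qFactorial q n / (qFactorial q k * qFactorial q (n - k)) := by
  obtain ⟨c, rfl⟩ := Nat.exists_eq_add_of_le' h
  rw [Nat.add_sub_cancel, gbinom, Nat.add_sub_cancel, prod_div_distrib, qFactorial_add,
    mul_comm (qFactorial q k), mul_div_mul_left _ _ (qFactorial_ne_zero hq c)]
  rfl

lemma gbinom_self (hq : 1 < q) (n : ℕ) : gbinom q n n = 1 :=
  prod_eq_one fun j hj => by
    rw [Nat.sub_self, zero_add, div_self (pow_sub_one_ne_zero hq (by grind))]

lemma gbinom_mul_gbinom (hq : 1 < q) {n i k : ℕ} (hki : k ≤ i) (hin : i ≤ n) :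
    gbinom q n i * gbinom q i k = gbinom q n k * gbinom q (n - k) (i - k) := by
  rw [gbinom_eq_qFactorial_div hq hin, gbinom_eq_qFactorial_div hq hki,
    gbinom_eq_qFactorial_div hq (hki.trans hin), gbinom_eq_qFactorial_div hq (by omega),
    Nat.sub_sub_sub_cancel_right hki]
  have hne := qFactorial_ne_zero hq
  field_simp [hne]

end qFactorial

/-- `gbinom q n k = 1` (not `0`) for `k > n`, so Pascal's rule needs this extension by zero. -/
noncomputable def qChoose (q : ℝ) (n k : ℕ) : ℝ := if k ≤ n then gbinom q n k else 0

section qChoose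

variable {q : ℝ}

lemma qChoose_of_le {n k : ℕ} (h : k ≤ n) : qChoose q n k = gbinom q n k := if_pos h

lemma qChoose_of_lt {n k : ℕ} (h : n < k) : qChoose q n k = 0 := if_neg (by omega)

lemma qChoose_zero_right (q : ℝ) (n : ℕ) : qChoose q n 0 = 1 := by
  simp [qChoose, gbinom]

lemma qChoose_succ_succ (hq : 1 < q) (n k : ℕ) :
    qChoose q (n + 1) (k + 1) = qChoose q n (k + 1) + q ^ (n - k) * qChoose q n k := by
  rcases lt_trichotomy k n with hlt | rfl | hgt
  · obtain ⟨c, rfl⟩ := Nat.exists_eq_add_of_lt hlt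
    rw [qChoose_of_le (by omega), qChoose_of_le (by omega), qChoose_of_le (by omega),
      gbinom_eq_qFactorial_div hq (by omega), gbinom_eq_qFactorial_div hq (by omega),
      gbinom_eq_qFactorial_div hq (by omega),
      show k + c + 1 + 1 - (k + 1) = c + 1 by omega, show k + c + 1 - (k + 1) = c by omega,
      show k + c + 1 - k = c + 1 by omega,
      qFactorial_succ q (k + c + 1), qFactorial_succ q c, qFactorial_succ q k]
    have hne := qFactorial_ne_zero hq
    have hc := pow_sub_one_ne_zero hq (Nat.succ_ne_zero c)
    have hk := pow_sub_one_ne_zero hq (Nat.succ_ne_zero k)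
    field_simp
    rw [show k + c + 1 + 1 = (k + 1) + (c + 1) by ring, pow_add]
    ring
  · rw [qChoose_of_lt (Nat.lt_succ_self k), qChoose_of_le le_rfl, qChoose_of_le le_rfl,
      gbinom_self hq, gbinom_self hq, Nat.sub_self, pow_zero]
    ring
  · rw [qChoose_of_lt (by omega), qChoose_of_lt (by omega), qChoose_of_lt hgt]
    ring

theorem sum_qChoose_mul_pow (hq : 1 < q) (n : ℕ) (x : ℝ) :
    ∑ d ∈ range (n + 1), q ^ d.choose 2 * qChoose q n d * x ^ d =
      ∏ j ∈ range n, (1 + q ^ j * x) := by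
  induction n with
  | zero => simp [qChoose_zero_right]
  | succ n ih =>
    have hpascal : ∀ e ∈ range (n + 1),
        q ^ (e + 1).choose 2 * qChoose q (n + 1) (e + 1) * x ^ (e + 1) =
          q ^ (e + 1).choose 2 * qChoose q n (e + 1) * x ^ (e + 1) +
            q ^ n * x * (q ^ e.choose 2 * qChoose q n e * x ^ e) := by
      intro e he
      have hexp : q ^ (e + 1).choose 2 * q ^ (n - e) = q ^ e.choose 2 * q ^ n := by
        rw [← pow_add, ← pow_add, Nat.choose_succ_succ', Nat.choose_one_right]
        grind
      rw [qChoose_succ_succ hq]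
      linear_combination qChoose q n e * x ^ (e + 1) * hexp
    have htop : ∑ e ∈ range (n + 1), q ^ (e + 1).choose 2 * qChoose q n (e + 1) * x ^ (e + 1) +
        q ^ (0 : ℕ).choose 2 * qChoose q (n + 1) 0 * x ^ 0 =
          ∑ d ∈ range (n + 1), q ^ d.choose 2 * qChoose q n d * x ^ d := by
      rw [qChoose_zero_right, ← qChoose_zero_right q n, ← sum_range_succ' (fun d =>
        q ^ d.choose 2 * qChoose q n d * x ^ d), sum_range_succ, qChoose_of_lt n.lt_succ_self]
      ring
    rw [sum_range_succ', sum_congr rfl hpascal, sum_add_distrib, ← mul_sum, add_right_comm, htop,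
      ih, prod_range_succ]
    ring

lemma sum_neg_one_pow_mul_qChoose (hq : 1 < q) {n : ℕ} (hn : n ≠ 0) :
    ∑ d ∈ range (n + 1), (-1) ^ d * q ^ d.choose 2 * qChoose q n d = 0 := by
  have h := sum_qChoose_mul_pow hq n (-1)
  rw [prod_eq_zero (mem_range.2 (Nat.pos_of_ne_zero hn)) (by ring)] at h
  rw [← h]
  exact sum_congr rfl fun _ _ => by ring

end qChoose

noncomputable def parabolicIndex (q : ℝ) (m i : ℕ) : ℝ :=
  gbinom q (m - 1) (i - 1) * ∏ j ∈ Icc (i + 1) m, (q ^ j + 1)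

section parabolicIndex

variable {q : ℝ}

lemma parabolicIndex_self (hq : 1 < q) (m : ℕ) : parabolicIndex q m m = 1 := by
  rw [parabolicIndex, gbinom_self hq, Icc_eq_empty (by omega), prod_empty, mul_one]

lemma parabolicIndex_mul_parabolicIndex (hq : 1 < q) {m i k : ℕ} (hk : 1 ≤ k) (hki : k ≤ i)
    (him : i ≤ m) :
    parabolicIndex q m i * parabolicIndex q i k =
      parabolicIndex q m k * qChoose q (m - k) (i - k) := by
  have hgbinom :=
    gbinom_mul_gbinom hq (show k - 1 ≤ i - 1 by omega) (show i - 1 ≤ m - 1 by omega)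
  rw [show m - 1 - (k - 1) = m - k by omega, show i - 1 - (k - 1) = i - k by omega] at hgbinom
  have hprod : (∏ j ∈ Icc (k + 1) i, (q ^ j + 1)) * ∏ j ∈ Icc (i + 1) m, (q ^ j + 1) =
      ∏ j ∈ Icc (k + 1) m, (q ^ j + 1) := by
    simp only [Icc_add_one_left_eq_Ioc]
    exact prod_Ioc_consecutive _ hki him
  rw [parabolicIndex, parabolicIndex, parabolicIndex, qChoose_of_le (by omega)]
  linear_combination
    (∏ j ∈ Icc (k + 1) i, (q ^ j + 1)) * (∏ j ∈ Icc (i + 1) m, (q ^ j + 1)) * hgbinom +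
      gbinom q (m - 1) (k - 1) * gbinom q (m - k) (i - k) * hprod

lemma sum_parabolicIndex_mul_alternating (hq : 1 < q) {m k : ℕ} (hk : 1 ≤ k) (hkm : k < m) :
    ∑ i ∈ Icc k m,
      parabolicIndex q m i * ((-1) ^ (i - k) * q ^ (i - k).choose 2 * parabolicIndex q i k) = 0 :=
  calc _ = parabolicIndex q m k * ∑ i ∈ Icc k m, (-1) ^ (i - k) * q ^ (i - k).choose 2 *
        qChoose q (m - k) (i - k) := by
        rw [mul_sum]
        refine sum_congr rfl fun i hi => ?_
        rw [mem_Icc] at hi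
        linear_combination (-1) ^ (i - k) * q ^ (i - k).choose 2 *
          parabolicIndex_mul_parabolicIndex hq hk hi.1 hi.2
    _ = parabolicIndex q m k * ∑ d ∈ range (m - k + 1), (-1) ^ d * q ^ d.choose 2 *
        qChoose q (m - k) d := by
        rw [← Ico_add_one_right_eq_Icc, sum_Ico_eq_sum_range, Nat.sub_add_comm hkm.le]
        simp only [Nat.add_sub_cancel_left]
    _ = 0 := by rw [sum_neg_one_pow_mul_qChoose hq (by omega), mul_zero]

end parabolicIndex

theorem eq_sum_of_unitriangular {R : Type*} [CommRing R] {A B : ℕ → ℕ → R} {X Y : ℕ → R}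
    (hA : ∀ m, A m m = 1) (hB : ∀ m, B m m = 1)
    (horth : ∀ k m, 1 ≤ k → k < m → ∑ i ∈ Icc k m, A m i * B i k = 0)
    (hX : ∀ m, 1 ≤ m → X m = Y m - ∑ i ∈ Icc 1 (m - 1), A m i * X i) :
    ∀ m, 1 ≤ m → X m = ∑ k ∈ Icc 1 m, B m k * Y k := by
  intro m
  induction m using Nat.strong_induction_on with
  | _ m ih =>
    intro hm
    obtain ⟨n, rfl⟩ := Nat.exists_eq_add_of_le' hm
    have hcol : ∀ k ∈ Icc 1 n, ∑ i ∈ Icc k n, A (n + 1) i * B i k = -B (n + 1) k := by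
      intro k hk
      have h := horth k (n + 1) (mem_Icc.1 hk).1 (by grind)
      rw [sum_Icc_succ_top (by grind), hA, one_mul] at h
      exact eq_neg_of_add_eq_zero_left h
    have hlower : ∑ i ∈ Icc 1 n, A (n + 1) i * X i = -∑ k ∈ Icc 1 n, B (n + 1) k * Y k :=
      calc _ = ∑ i ∈ Icc 1 n, ∑ k ∈ Icc 1 i, A (n + 1) i * B i k * Y k :=
            sum_congr rfl fun i hi => by
              rw [ih i (by grind) (mem_Icc.1 hi).1, mul_sum]
              simp only [mul_assoc]
        _ = ∑ k ∈ Icc 1 n, ∑ i ∈ Icc k n, A (n + 1) i * B i k * Y k :=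
            sum_comm' fun _ _ => by simp only [mem_Icc]; omega
        _ = ∑ k ∈ Icc 1 n, -B (n + 1) k * Y k :=
            sum_congr rfl fun k hk => by rw [← sum_mul, hcol k hk]
        _ = _ := by simp only [neg_mul, sum_neg_distrib]
    rw [hX (n + 1) hm, Nat.add_sub_cancel, hlower, sum_Icc_succ_top (by omega), hB, one_mul]
    ring

theorem stmt6_general (q : ℝ) (hq : 1 < q) (N : ℕ) (X : ℕ → ℝ)
    (hX : ∀ m : ℕ, 1 ≤ m → X m = q ^ (2 * m * N) -
      ∑ i ∈ Finset.Icc 1 (m - 1),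
        gbinom q (m - 1) (i - 1) * (∏ j ∈ Finset.Icc (i + 1) m, (q ^ j + 1)) * X i) :
    ∀ m : ℕ, 1 ≤ m → X m = ∑ i ∈ Finset.Icc 1 m,
      (-1 : ℝ) ^ (m - i) * q ^ ((m - i) * (m - i - 1) / 2) * gbinom q (m - 1) (i - 1) *
        (∏ j ∈ Finset.Icc (i + 1) m, (q ^ j + 1)) * q ^ (2 * i * N) := by
  intro m hm
  rw [eq_sum_of_unitriangular (A := parabolicIndex q)
    (B := fun m i => (-1) ^ (m - i) * q ^ (m - i).choose 2 * parabolicIndex q m i)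
    (Y := fun m => q ^ (2 * m * N)) (parabolicIndex_self hq)
    (fun m => by simp [parabolicIndex_self hq])
    (fun _ _ hk hkm => sum_parabolicIndex_mul_alternating hq hk hkm) hX m hm]
  refine sum_congr rfl fun i _ => ?_
  rw [Nat.choose_two_right, parabolicIndex]
  ring

theorem stmt6 (q : ℝ) (hq : 1 < q) (N : ℕ) (X : ℕ → ℝ)
    (hX1 : X 1 = q ^ (2 * N))
    (hX : ∀ m : ℕ, 1 ≤ m → X m = q ^ (2 * m * N) -
      ∑ i ∈ Finset.Icc 1 (m - 1),
        gbinom q (m - 1) (i - 1) * (∏ j ∈ Finset.Icc (i + 1) m, (q ^ j + 1)) * X i) :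
    ∀ m : ℕ, 1 ≤ m → X m = ∑ i ∈ Finset.Icc 1 m,
      (-1 : ℝ) ^ (m - i) * q ^ ((m - i) * (m - i - 1) / 2) * gbinom q (m - 1) (i - 1) *
        (∏ j ∈ Finset.Icc (i + 1) m, (q ^ j + 1)) * q ^ (2 * i * N) :=
  stmt6_general q hq N X hX
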